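/- arXiv:1908.11481 — 2 statements merged into one kernel-verified Lean document; each statement's English description precedes it below -/
import Mathlib

section
/- Suppose P : ℝ → ℝ³ is differentiable and satisfies dP/dt = -(Ω(t) × P(t)) + (1/2) Σ_{k=1}^{N} ξ_k × (ξ_k × P(t)) for vectors ξ_1,…,ξ_N ∈ ℝ³ and a time-dependent vector Ω(t). Then d/dt |P(t)|² = - Σ_{k=1}^{N} |ξ_k × P(t)|², and in particular t ↦ |P(t)|² is nonincreasing. -/
noncomputable def cross3 (a b : EuclideanSpace ℝ (Fin 3)) : EuclideanSpace ℝ (Fin 3) :=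
  WithLp.toLp 2 ![a 1 * b 2 - a 2 * b 1, a 2 * b 0 - a 0 * b 2, a 0 * b 1 - a 1 * b 0]

/-!
Both drift terms are tested against `P`: the precession `Ω × P` is orthogonal to `P`, and
`⟪P, ξ × (ξ × P)⟫ = -‖ξ × P‖²` (a triple product), so `d/dt ‖P‖² = 2 ⟪P, dP/dt⟫` is minus a
sum of squares.
-/

open scoped RealInnerProductSpace

lemma inner_cross3_self_right (a b : EuclideanSpace ℝ (Fin 3)) : ⟪b, cross3 a b⟫ = 0 := by
  simp [cross3, PiLp.inner_apply, Fin.sum_univ_three]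
  ring

lemma inner_cross3_cross3_self_right (a b : EuclideanSpace ℝ (Fin 3)) :
    ⟪b, cross3 a (cross3 a b)⟫ = -‖cross3 a b‖ ^ 2 := by
  simp [cross3, PiLp.inner_apply, Fin.sum_univ_three, EuclideanSpace.real_norm_sq_eq]
  ring

lemma inner_precession_add_double_cross3 {ι : Type*} [Fintype ι]
    (ξ : ι → EuclideanSpace ℝ (Fin 3)) (ω p : EuclideanSpace ℝ (Fin 3)) :
    ⟪p, -cross3 ω p + (1 / 2 : ℝ) • ∑ k, cross3 (ξ k) (cross3 (ξ k) p)⟫ =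
      -(1 / 2) * ∑ k, ‖cross3 (ξ k) p‖ ^ 2 := by
  simp only [inner_add_right, inner_neg_right, inner_cross3_self_right, real_inner_smul_right,
    inner_sum, inner_cross3_cross3_self_right, Finset.sum_neg_distrib]
  ring

/-- If `P : ℝ → ℝ³` satisfies `dP/dt = -(Ω(t) × P(t)) + (1/2) ∑ₖ ξₖ × (ξₖ × P(t))`, then
`d/dt ‖P t‖² = -∑ₖ ‖ξₖ × P t‖²`, and in particular `t ↦ ‖P t‖²` is nonincreasing. -/
theorem stmt3 (N : ℕ) (ξ : Fin N → EuclideanSpace ℝ (Fin 3))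
    (Ω : ℝ → EuclideanSpace ℝ (Fin 3)) (P : ℝ → EuclideanSpace ℝ (Fin 3))
    (hP : ∀ t, HasDerivAt P
      (-(cross3 (Ω t) (P t)) + (1 / 2 : ℝ) • ∑ k, cross3 (ξ k) (cross3 (ξ k) (P t))) t) :
    (∀ t, HasDerivAt (fun s => ‖P s‖ ^ 2) (-(∑ k, ‖cross3 (ξ k) (P t)‖ ^ 2)) t) ∧
      Antitone fun t => ‖P t‖ ^ 2 := by
  have hnormSq (t : ℝ) :
      HasDerivAt (fun s => ‖P s‖ ^ 2) (-(∑ k, ‖cross3 (ξ k) (P t)‖ ^ 2)) t := by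
    convert (hP t).norm_sq using 1
    rw [inner_precession_add_double_cross3]
    ring
  refine ⟨hnormSq, antitone_of_hasDerivAt_nonpos hnormSq fun t => ?_⟩
  simp only [Pi.zero_apply, neg_nonpos]
  positivity
end

section
/- Let w : [0,T] × 𝕋² → ℝ be a smooth solution of ∂_t w + v ⬝ ∇w = (1/2) Σ_{k=1}^{N} ξ_k ⬝ ∇(ξ_k ⬝ ∇w), where v and each ξ_k are smooth divergence-free vector fields on 𝕋² (ξ_k time-independent). Then d/dt ∫_{𝕋²} w(t,x)² dx = - Σ_{k=1}^{N} ∫_{𝕋²} (ξ_k ⬝ ∇w(t,x))² dx ≤ 0. -/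
open MeasureTheory

/-- `pd f x j` is the partial derivative `∂ⱼ f (x)`. -/
noncomputable def pd {d : ℕ} (f : (Fin d → ℝ) → ℝ) (x : Fin d → ℝ) (j : Fin d) : ℝ :=
  fderiv ℝ f x (Pi.single j 1)

/-- `Per f` means `f` is `ℤᵈ`-periodic, i.e. a function on the flat torus `𝕋ᵈ`. -/
def Per {d : ℕ} (f : (Fin d → ℝ) → ℝ) : Prop :=
  ∀ (x : Fin d → ℝ) (i : Fin d), f (x + Pi.single i 1) = f x

lemma pd_mul {d : ℕ} {g h : (Fin d → ℝ) → ℝ} {x : Fin d → ℝ}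
    (hg : DifferentiableAt ℝ g x) (hh : DifferentiableAt ℝ h x) (j : Fin d) :
    pd (fun y => g y * h y) x j = pd g x j * h x + g x * pd h x j := by
  unfold pd
  rw [fderiv_fun_mul hg hh]
  simp only [ContinuousLinearMap.add_apply, ContinuousLinearMap.coe_smul', Pi.smul_apply,
    smul_eq_mul]
  ring

lemma pd_sq {d : ℕ} {f : (Fin d → ℝ) → ℝ} {x : Fin d → ℝ}
    (hf : DifferentiableAt ℝ f x) (j : Fin d) :
    pd (fun y => f y ^ 2) x j = 2 * f x * pd f x j := by
  have h1 : (fun y => f y ^ 2) = fun y => f y * f y := by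
    funext y; ring
  rw [h1, pd_mul hf hf j]; ring

lemma pd_shift {d : ℕ} {f : (Fin d → ℝ) → ℝ} (hf : Differentiable ℝ f)
    (hp : Per f) (x : Fin d → ℝ) (i j : Fin d) :
    pd f (x + Pi.single i 1) j = pd f x j := by
  have h3 : HasFDerivAt (fun y => f (y + Pi.single i 1))
      (fderiv ℝ f (x + Pi.single i 1)) x := by
    have := (hf (x + Pi.single i 1)).hasFDerivAt.comp x
      ((hasFDerivAt_id x).add_const (Pi.single i 1))
    simpa [Function.comp_def] using this
  have h4 : (fun y => f (y + Pi.single i 1)) = f := funext fun y => hp y i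
  rw [h4] at h3
  unfold pd
  rw [← h3.fderiv]

lemma div_integral_zero (F : Fin 2 → (Fin 2 → ℝ) → ℝ)
    (hF : ∀ i, ContDiff ℝ (⊤ : ℕ∞) (F i))
    (hFp : ∀ i (x : Fin 2 → ℝ), F i (x + Pi.single i 1) = F i x) :
    ∫ x in Set.Icc (0 : Fin 2 → ℝ) 1, ∑ i, pd (F i) x i = 0 := by
  have hle : (0 : Fin 2 → ℝ) ≤ 1 := fun i => zero_le_one
  have hcont : Continuous fun x => ∑ i, pd (F i) x i := by
    apply continuous_finset_sum
    intro i _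
    exact ((((hF i).fderiv_right (m := (⊤ : ℕ∞)) (by simp))).clm_apply contDiff_const).continuous
  have key := MeasureTheory.integral_divergence_of_hasFDerivAt_off_countable'
    (0 : Fin 2 → ℝ) 1 hle F (fun i x => fderiv ℝ (F i) x) ∅ Set.countable_empty
    (fun i => (hF i).continuous.continuousOn)
    (fun x _ i => ((hF i).differentiable (by simp) x).hasFDerivAt)
    (hcont.continuousOn.integrableOn_compact isCompact_Icc)
  have hins : ∀ (i : Fin 2) (y : Fin 1 → ℝ),
      (Fin.insertNth (α := fun _ => ℝ) i 1 y : Fin 2 → ℝ)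
        = Fin.insertNth (α := fun _ => ℝ) i 0 y + Pi.single i 1 := by
    intro i y
    funext j
    rcases eq_or_ne j i with rfl | hj
    · simp
    · obtain ⟨j', rfl⟩ := Fin.exists_succAbove_eq hj
      simp [Fin.insertNth_apply_succAbove, Pi.single_eq_of_ne (Fin.succAbove_ne i j')]
  have key' : (∫ x in Set.Icc (0 : Fin 2 → ℝ) 1, ∑ i, pd (F i) x i)
      = ∑ i : Fin 2, ((∫ x in Set.Icc ((0 : Fin 2 → ℝ) ∘ i.succAbove) ((1 : Fin 2 → ℝ) ∘ i.succAbove),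
          F i (i.insertNth ((1 : Fin 2 → ℝ) i) x)) -
        ∫ x in Set.Icc ((0 : Fin 2 → ℝ) ∘ i.succAbove) ((1 : Fin 2 → ℝ) ∘ i.succAbove),
          F i (i.insertNth ((0 : Fin 2 → ℝ) i) x)) := key
  rw [key']
  apply Finset.sum_eq_zero
  intro i _
  have heq : ∀ y : Fin 1 → ℝ, F i (Fin.insertNth i ((1 : Fin 2 → ℝ) i) y)
      = F i (Fin.insertNth i ((0 : Fin 2 → ℝ) i) y) := by
    intro y
    have h1 : ((1 : Fin 2 → ℝ) i) = (1 : ℝ) := rfl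
    have h0 : ((0 : Fin 2 → ℝ) i) = (0 : ℝ) := rfl
    rw [h1, h0, hins i y, hFp i _]
  simp only [heq, sub_self]

/-- If `w` is a smooth solution of `∂ₜw + v ⬝ ∇w = (1/2) ∑ₖ ξₖ ⬝ ∇(ξₖ ⬝ ∇w)` on `𝕋²` with
`v` and the time-independent `ξₖ` smooth divergence-free, then
`d/dt ∫ w² dx = -∑ₖ ∫ (ξₖ ⬝ ∇w)² dx ≤ 0`. -/
theorem stmt9 (N : ℕ) (w : ℝ → (Fin 2 → ℝ) → ℝ) (v : ℝ → (Fin 2 → ℝ) → Fin 2 → ℝ)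
    (ξ : Fin N → (Fin 2 → ℝ) → Fin 2 → ℝ)
    (hw : ContDiff ℝ (⊤ : ℕ∞) fun p : ℝ × (Fin 2 → ℝ) => w p.1 p.2)
    (hv : ∀ j, ContDiff ℝ (⊤ : ℕ∞) fun p : ℝ × (Fin 2 → ℝ) => v p.1 p.2 j)
    (hξ : ∀ k, ContDiff ℝ (⊤ : ℕ∞) (ξ k))
    (hwp : ∀ t, Per (w t)) (hvp : ∀ t j, Per fun x => v t x j)
    (hξp : ∀ k j, Per fun x => ξ k x j)
    (hvdiv : ∀ t x, ∑ j, pd (fun y => v t y j) x j = 0)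
    (hξdiv : ∀ k x, ∑ j, pd (fun y => ξ k y j) x j = 0)
    (hpde : ∀ t x, deriv (fun s => w s x) t + ∑ j, v t x j * pd (w t) x j
      = (1 / 2 : ℝ) * ∑ k, ∑ i, ξ k x i * pd (fun y => ∑ j, ξ k y j * pd (w t) y j) x i) :
    ∀ t, HasDerivAt (fun s => ∫ x in Set.Icc (0 : Fin 2 → ℝ) 1, (w s x) ^ 2)
        (-(∑ k, ∫ x in Set.Icc (0 : Fin 2 → ℝ) 1, (∑ j, ξ k x j * pd (w t) x j) ^ 2)) t ∧
      -(∑ k, ∫ x in Set.Icc (0 : Fin 2 → ℝ) 1, (∑ j, ξ k x j * pd (w t) x j) ^ 2) ≤ 0 := by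
  intro t
  -- basic smoothness in space
  have hwx : ∀ s, ContDiff ℝ (⊤ : ℕ∞) (w s) := fun s =>
    hw.comp (ContDiff.prodMk (contDiff_const (c := s)) contDiff_id)
  have hvx : ∀ s j, ContDiff ℝ (⊤ : ℕ∞) (fun x => v s x j) := fun s j =>
    (hv j).comp (ContDiff.prodMk (contDiff_const (c := s)) contDiff_id)
  have hξx : ∀ k j, ContDiff ℝ (⊤ : ℕ∞) (fun x => ξ k x j) := fun k j =>
    (contDiff_pi.mp (hξ k)) j
  have hpdwx : ∀ s j, ContDiff ℝ (⊤ : ℕ∞) (fun x => pd (w s) x j) := fun s j =>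
    ((hwx s).fderiv_right (m := (⊤ : ℕ∞)) (by simp)).clm_apply contDiff_const
  -- g k = ξ_k ⬝ ∇ w t
  set g : Fin N → (Fin 2 → ℝ) → ℝ := fun k x => ∑ j, ξ k x j * pd (w t) x j with hg_def
  have hgC : ∀ k, ContDiff ℝ (⊤ : ℕ∞) (g k) := fun k =>
    ContDiff.sum fun j _ => (hξx k j).mul (hpdwx t j)
  have hgp : ∀ k, Per (g k) := by
    intro k x i
    simp only [hg_def]
    refine Finset.sum_congr rfl fun j _ => ?_
    have e1 : ξ k (x + Pi.single i 1) j = ξ k x j := hξp k j x i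
    rw [e1, pd_shift ((hwx t).differentiable (by simp)) (hwp t) x i j]
  -- time derivative of w
  set W : ℝ × (Fin 2 → ℝ) → ℝ := fun p => w p.1 p.2 with hW_def
  set dtw : ℝ → (Fin 2 → ℝ) → ℝ := fun s x => fderiv ℝ W (s, x) (1, 0) with hdtw_def
  have hderiv_t : ∀ s x, HasDerivAt (fun r => w r x) (dtw s x) s := by
    intro s x
    have h1 : HasFDerivAt W (fderiv ℝ W (s, x)) (s, x) :=
      (hw.differentiable (by simp) _).hasFDerivAt
    have h2 : HasDerivAt (fun r : ℝ => (r, x)) ((1 : ℝ), (0 : Fin 2 → ℝ)) s :=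
      (hasDerivAt_id s).prodMk (hasDerivAt_const s x)
    exact h1.comp_hasDerivAt s h2
  have hdtwC : ContDiff ℝ (⊤ : ℕ∞) (fun p : ℝ × (Fin 2 → ℝ) => dtw p.1 p.2) :=
    (hw.fderiv_right (m := (⊤ : ℕ∞)) (by simp)).clm_apply contDiff_const
  -- differentiation under the integral sign
  have hFd : ∀ s x, HasDerivAt (fun r => w r x ^ 2) (2 * w s x * dtw s x) s := by
    intro s x
    have h := (hderiv_t s x).fun_pow 2
    refine h.congr_deriv ?_
    push_cast
    ring
  have hK : IsCompact ((Metric.closedBall t 1) ×ˢ (Set.Icc (0 : Fin 2 → ℝ) 1)) :=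
    (isCompact_closedBall t 1).prod isCompact_Icc
  obtain ⟨C, hC⟩ := hK.exists_bound_of_continuousOn
    (Continuous.continuousOn (by
      have h1 : Continuous (fun p : ℝ × (Fin 2 → ℝ) => w p.1 p.2) := hw.continuous
      have h2 : Continuous (fun p : ℝ × (Fin 2 → ℝ) => dtw p.1 p.2) := hdtwC.continuous
      exact (continuous_const.mul h1).mul h2 :
        Continuous (fun p : ℝ × (Fin 2 → ℝ) => 2 * w p.1 p.2 * dtw p.1 p.2)))
  have hμfin : volume (Set.Icc (0 : Fin 2 → ℝ) 1) < ⊤ := isCompact_Icc.measure_lt_top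
  have hdom := hasDerivAt_integral_of_dominated_loc_of_deriv_le
    (F := fun s x => w s x ^ 2) (F' := fun s x => 2 * w s x * dtw s x)
    (x₀ := t) (bound := fun _ => C) (μ := volume.restrict (Set.Icc (0 : Fin 2 → ℝ) 1))
    (s := Metric.ball t 1) (Metric.ball_mem_nhds t one_pos)
    (Filter.Eventually.of_forall fun s =>
      (((hwx s).continuous.pow 2).aestronglyMeasurable))
    ((((hwx t).continuous.pow 2).continuousOn.integrableOn_compact isCompact_Icc))
    (((continuous_const.mul (hwx t).continuous).mul
        ((hdtwC.comp (ContDiff.prodMk (contDiff_const (c := t)) contDiff_id)).continuous)).aestronglyMeasurable)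
    (by
      filter_upwards [MeasureTheory.ae_restrict_mem measurableSet_Icc] with x hx
      intro s hs
      exact hC (s, x) ⟨Metric.ball_subset_closedBall hs, hx⟩)
    (integrableOn_const hμfin.ne)
    (Filter.Eventually.of_forall fun x s _ => hFd s x)
  obtain ⟨-, hD⟩ := hdom
  -- integrability of continuous functions on the cube
  have intOn : ∀ {f : (Fin 2 → ℝ) → ℝ}, Continuous f →
      IntegrableOn f (Set.Icc (0 : Fin 2 → ℝ) 1) := fun hf =>
    hf.continuousOn.integrableOn_compact isCompact_Icc
  -- Claim 1 : ∫ 2 w (v⬝∇w) = 0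
  have claim1 : (∫ x in Set.Icc (0 : Fin 2 → ℝ) 1,
      2 * w t x * ∑ j, v t x j * pd (w t) x j) = 0 := by
    have h := div_integral_zero (fun i x => v t x i * w t x ^ 2)
      (fun i => (hvx t i).mul ((hwx t).pow 2))
      (fun i x => by
        show v t (x + Pi.single i 1) i * w t (x + Pi.single i 1) ^ 2 = v t x i * w t x ^ 2
        have e1 : v t (x + Pi.single i 1) i = v t x i := hvp t i x i
        rw [e1, hwp t x i])
    rw [← h]
    refine setIntegral_congr_fun measurableSet_Icc fun x _ => ?_
    have hdw : DifferentiableAt ℝ (w t) x := (hwx t).differentiable (by simp) x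
    have hptw : ∀ i, pd (fun y => v t y i * w t y ^ 2) x i
        = pd (fun y => v t y i) x i * w t x ^ 2
          + v t x i * (2 * w t x * pd (w t) x i) := by
      intro i
      rw [pd_mul ((hvx t i).differentiable (by simp) x)
        (((hwx t).pow 2).differentiable (by simp) x) i, pd_sq hdw i]
    rw [show (∑ i, pd (fun y => v t y i * w t y ^ 2) x i)
        = ∑ i, (pd (fun y => v t y i) x i * w t x ^ 2
            + v t x i * (2 * w t x * pd (w t) x i)) from
          Finset.sum_congr rfl fun i _ => hptw i,
      Finset.sum_add_distrib, ← Finset.sum_mul, hvdiv t x, zero_mul, zero_add,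
      Finset.mul_sum]
    exact Finset.sum_congr rfl fun i _ => by ring
  -- Claim 2 : ∫ w (ξ_k ⬝ ∇ g_k) = - ∫ g_k ^ 2
  have claim2 : ∀ k, (∫ x in Set.Icc (0 : Fin 2 → ℝ) 1,
      w t x * ∑ i, ξ k x i * pd (g k) x i)
      = -∫ x in Set.Icc (0 : Fin 2 → ℝ) 1, g k x ^ 2 := by
    intro k
    have h := div_integral_zero (fun i x => ξ k x i * (w t x * g k x))
      (fun i => (hξx k i).mul ((hwx t).mul (hgC k)))
      (fun i x => by
        show ξ k (x + Pi.single i 1) i * (w t (x + Pi.single i 1) * g k (x + Pi.single i 1))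
          = ξ k x i * (w t x * g k x)
        have e1 : ξ k (x + Pi.single i 1) i = ξ k x i := hξp k i x i
        rw [e1, hwp t x i, hgp k x i])
    have hpt : ∀ x, (∑ i, pd (fun y => ξ k y i * (w t y * g k y)) x i)
        = g k x ^ 2 + w t x * ∑ i, ξ k x i * pd (g k) x i := by
      intro x
      have hdw : DifferentiableAt ℝ (w t) x := (hwx t).differentiable (by simp) x
      have hdg : DifferentiableAt ℝ (g k) x := (hgC k).differentiable (by simp) x
      have h1 : ∀ i, pd (fun y => ξ k y i * (w t y * g k y)) x i
          = pd (fun y => ξ k y i) x i * (w t x * g k x)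
            + ξ k x i * (pd (w t) x i * g k x + w t x * pd (g k) x i) := by
        intro i
        rw [pd_mul ((hξx k i).differentiable (by simp) x) (hdw.fun_mul hdg) i,
          pd_mul hdw hdg i]
      simp only [h1]
      rw [Finset.sum_add_distrib, ← Finset.sum_mul, hξdiv k x]
      have h2 : ∑ i, ξ k x i * (pd (w t) x i * g k x + w t x * pd (g k) x i)
          = (∑ i, ξ k x i * pd (w t) x i) * g k x
            + w t x * ∑ i, ξ k x i * pd (g k) x i := by
        rw [Finset.sum_mul, Finset.mul_sum, ← Finset.sum_add_distrib]
        exact Finset.sum_congr rfl fun i _ => by ring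
      rw [h2]
      have h4 : (∑ i, ξ k x i * pd (w t) x i) = g k x := rfl
      rw [h4]
      ring
    have h3 : (∫ x in Set.Icc (0 : Fin 2 → ℝ) 1,
        (g k x ^ 2 + w t x * ∑ i, ξ k x i * pd (g k) x i)) = 0 := by
      rw [← h]
      exact setIntegral_congr_fun measurableSet_Icc fun x _ => (hpt x).symm
    have hint1 : IntegrableOn (fun x => g k x ^ 2) (Set.Icc (0 : Fin 2 → ℝ) 1) :=
      intOn ((hgC k).continuous.pow 2)
    have hint2 : IntegrableOn (fun x => w t x * ∑ i, ξ k x i * pd (g k) x i)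
        (Set.Icc (0 : Fin 2 → ℝ) 1) := by
      refine intOn ((hwx t).continuous.mul ?_)
      exact (continuous_finset_sum _ fun i _ =>
        ((hξx k i).continuous.mul
          (((hgC k).fderiv_right (m := (⊤ : ℕ∞)) (by simp)).clm_apply contDiff_const).continuous))
    rw [integral_add hint1 hint2] at h3
    linarith
  -- identify the derivative value
  have hval : (∫ x in Set.Icc (0 : Fin 2 → ℝ) 1, 2 * w t x * dtw t x)
      = -(∑ k, ∫ x in Set.Icc (0 : Fin 2 → ℝ) 1, g k x ^ 2) := by
    have hpde' : ∀ x, 2 * w t x * dtw t x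
        = (∑ k, w t x * ∑ i, ξ k x i * pd (g k) x i)
          - 2 * w t x * ∑ j, v t x j * pd (w t) x j := by
      intro x
      have h0 : dtw t x = deriv (fun s => w s x) t := ((hderiv_t t x).deriv).symm
      rw [h0]
      have h1 : deriv (fun s => w s x) t + ∑ j, v t x j * pd (w t) x j
          = (1 / 2 : ℝ) * ∑ k, ∑ i, ξ k x i * pd (g k) x i := hpde t x
      have h2 : deriv (fun s => w s x) t
          = (1 / 2 : ℝ) * (∑ k, ∑ i, ξ k x i * pd (g k) x i)
            - ∑ j, v t x j * pd (w t) x j := by linarith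
      rw [h2]
      have h3 : (∑ k, w t x * ∑ i, ξ k x i * pd (g k) x i)
          = 2 * w t x * ((1 / 2 : ℝ) * ∑ k, ∑ i, ξ k x i * pd (g k) x i) := by
        calc (∑ k, w t x * ∑ i, ξ k x i * pd (g k) x i)
            = w t x * ∑ k, ∑ i, ξ k x i * pd (g k) x i := (Finset.mul_sum _ _ _).symm
          _ = 2 * w t x * ((1 / 2 : ℝ) * ∑ k, ∑ i, ξ k x i * pd (g k) x i) := by ring
      rw [h3]
      ring
    have hintk : ∀ k, IntegrableOn (fun x => w t x * ∑ i, ξ k x i * pd (g k) x i)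
        (Set.Icc (0 : Fin 2 → ℝ) 1) := by
      intro k
      refine intOn ((hwx t).continuous.mul ?_)
      exact (continuous_finset_sum _ fun i _ =>
        ((hξx k i).continuous.mul
          (((hgC k).fderiv_right (m := (⊤ : ℕ∞)) (by simp)).clm_apply contDiff_const).continuous))
    have hintA : IntegrableOn (fun x => 2 * w t x * ∑ j, v t x j * pd (w t) x j)
        (Set.Icc (0 : Fin 2 → ℝ) 1) := by
      refine intOn ((continuous_const.mul (hwx t).continuous).mul ?_)
      exact continuous_finset_sum _ fun j _ =>
        ((hvx t j).continuous.mul (hpdwx t j).continuous)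
    calc (∫ x in Set.Icc (0 : Fin 2 → ℝ) 1, 2 * w t x * dtw t x)
        = ∫ x in Set.Icc (0 : Fin 2 → ℝ) 1,
            ((∑ k, w t x * ∑ i, ξ k x i * pd (g k) x i)
              - 2 * w t x * ∑ j, v t x j * pd (w t) x j) := by
          exact setIntegral_congr_fun measurableSet_Icc fun x _ => hpde' x
      _ = (∫ x in Set.Icc (0 : Fin 2 → ℝ) 1,
            ∑ k, w t x * ∑ i, ξ k x i * pd (g k) x i)
          - ∫ x in Set.Icc (0 : Fin 2 → ℝ) 1,
            2 * w t x * ∑ j, v t x j * pd (w t) x j := by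
          exact integral_sub (integrable_finset_sum _ fun k _ => hintk k) hintA
      _ = (∑ k, ∫ x in Set.Icc (0 : Fin 2 → ℝ) 1,
            w t x * ∑ i, ξ k x i * pd (g k) x i) - 0 := by
          rw [integral_finset_sum _ fun k _ => hintk k, claim1]
      _ = -(∑ k, ∫ x in Set.Icc (0 : Fin 2 → ℝ) 1, g k x ^ 2) := by
          rw [sub_zero, Finset.sum_congr rfl fun k _ => claim2 k, Finset.sum_neg_distrib]
  constructor
  · rw [hval] at hD
    exact hD
  · refine neg_nonpos.mpr (Finset.sum_nonneg fun k _ => ?_)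
    exact setIntegral_nonneg measurableSet_Icc fun x _ => sq_nonneg _
end
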